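/- arXiv:2111.10038 — 9 statements merged into one kernel-verified Lean document; each statement's English description precedes it below -/
import Mathlib

section
/- If a graph G is k-word-representable (there is a word W representing G in which every letter occurs exactly k times), then G is (k+1)-word-representable. -/
/-!
For `k ≥ 1` append to `W` its letters in the order of their *last* occurrences (`List.dedup`).
For distinct `x`, `y` this block restricted to `{x, y}` is `xy` or `yx`, and it ends with the
letter that ends `W` restricted to `{x, y}`; so it starts with the other one, and appending it
preserves alternation, while non-alternation survives in the unchanged prefix `W`.
For `k = 0` the word is empty, `G` is complete, and any permutation of the vertices represents it.
-/

/-- `W` is a word-representant for `G`: distinct letters `x`, `y` alternate in `W`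
(the restriction of `W` to `{x, y}` has no two equal consecutive letters) iff `x` and `y`
are adjacent in `G`. -/
def WordRepresents {V : Type*} [DecidableEq V] (W : List V) (G : SimpleGraph V) : Prop :=
  ∀ x y : V, x ≠ y →
    ((W.filter (fun a => a = x ∨ a = y)).Chain' (· ≠ ·) ↔ G.Adj x y)

namespace List

variable {α : Type*}

theorem Nodup.getLast?_ne_head? {l : List α} (hl : l.Nodup) {x y : α} (hx : x ∈ l) (hy : y ∈ l)
    (hxy : x ≠ y) : ∀ a ∈ l.getLast?, ∀ b ∈ l.head?, a ≠ b := by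
  rcases l with _ | ⟨c, t⟩
  · simp at hx
  rintro a ha b ⟨⟩ rfl
  obtain rfl | ht := eq_or_ne t []
  · simp_all
  rw [getLast?_cons_of_ne_nil ht, getLast?_eq_some_getLast ht, Option.mem_some_iff] at ha
  subst ha
  exact (nodup_cons.mp hl).1 (getLast_mem ht)

variable [DecidableEq α]

theorem dedup_filter (p : α → Bool) (l : List α) : (l.filter p).dedup = l.dedup.filter p := by
  induction l with
  | nil => rfl
  | cons a l ih =>
    by_cases hp : p a <;> by_cases ha : a ∈ l <;>
      simp [hp, ha, dedup_cons_of_mem, dedup_cons_of_notMem, ih]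

theorem getLast?_dedup (l : List α) : l.dedup.getLast? = l.getLast? := by
  induction l with
  | nil => rfl
  | cons a l ih =>
    by_cases ha : a ∈ l
    · rw [dedup_cons_of_mem ha, ih, getLast?_cons_of_ne_nil (ne_nil_of_mem ha)]
    · rw [dedup_cons_of_notMem ha, getLast?_cons, getLast?_cons, ih]

theorem isChain_ne_append_dedup_iff {l : List α} {x y : α} (hx : x ∈ l) (hy : y ∈ l)
    (hxy : x ≠ y) : (l ++ l.dedup).IsChain (· ≠ ·) ↔ l.IsChain (· ≠ ·) := by
  rw [isChain_append, ← getLast?_dedup]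
  have hd := nodup_dedup l
  exact ⟨And.left, fun h => ⟨h, Pairwise.isChain hd,
    hd.getLast?_ne_head? (mem_dedup.2 hx) (mem_dedup.2 hy) hxy⟩⟩

end List

section WordRepresents

variable {V : Type*} [DecidableEq V] {W : List V} {G : SimpleGraph V}

theorem wordRepresents_top_of_nodup (hW : W.Nodup) : WordRepresents W ⊤ :=
  fun _ _ hxy => iff_of_true (List.Pairwise.isChain (hW.filter _)) hxy

theorem WordRepresents.eq_top_of_nil (h : WordRepresents [] G) : G = ⊤ := by
  ext x y
  exact ⟨G.ne_of_adj, fun hxy => (h x y hxy).mp List.isChain_nil⟩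

theorem WordRepresents.append_dedup (h : WordRepresents W G) (hW : ∀ v, v ∈ W) :
    WordRepresents (W ++ W.dedup) G := by
  intro x y hxy
  rw [List.filter_append, ← List.dedup_filter, ← h x y hxy]
  exact List.isChain_ne_append_dedup_iff (List.mem_filter.2 ⟨hW x, by simp⟩)
    (List.mem_filter.2 ⟨hW y, by simp⟩) hxy

end WordRepresents

/-- If a graph `G` is `k`-word-representable (some word representing `G` has every letter
occurring exactly `k` times), then `G` is `(k+1)`-word-representable. -/
theorem kWordRepresentable_succ {V : Type*} [Fintype V] [DecidableEq V] (G : SimpleGraph V) (k : ℕ)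
    (h : ∃ W : List V, WordRepresents W G ∧ ∀ v : V, W.count v = k) :
    ∃ W : List V, WordRepresents W G ∧ ∀ v : V, W.count v = k + 1 := by
  obtain ⟨W, hrep, hcount⟩ := h
  rcases Nat.eq_zero_or_pos k with rfl | hk
  · obtain rfl : W = [] := List.eq_nil_iff_forall_not_mem.2 fun v => List.count_eq_zero.1 (hcount v)
    obtain rfl := hrep.eq_top_of_nil
    exact ⟨Finset.univ.toList, wordRepresents_top_of_nodup (Finset.nodup_toList _),
      fun v => List.count_eq_one_of_mem (Finset.nodup_toList _) (by simp)⟩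
  · have hmem (v : V) : v ∈ W := List.count_pos_iff.1 (hcount v ▸ hk)
    refine ⟨W ++ W.dedup, hrep.append_dedup hmem, fun v => ?_⟩
    rw [List.count_append, hcount, List.count_dedup, if_pos (hmem v)]
end

section
/- A graph G is word-representable if and only if it is k-word-representable for some k ≥ 1. -/
namespace List

variable {V : Type*} [DecidableEq V]

theorem count_le_count_add_one_and_getLast?_of_isChain_ne {x y : V} (hxy : x ≠ y)
    {l : List V} (hl : ∀ a ∈ l, a = x ∨ a = y) (hc : l.IsChain (· ≠ ·)) :
    l.count y ≤ l.count x + 1 ∧ (l.count y = l.count x + 1 → l.getLast? = some y) := by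
  induction l using List.reverseRecOn with
  | nil => simp
  | append_singleton t a ih =>
    obtain ⟨ht, -, hlast⟩ := isChain_append.mp hc
    obtain ⟨hle, heq⟩ := ih (fun b hb => hl b (mem_append_left _ hb)) ht
    rcases hl a (by simp) with rfl | rfl
    · simp [count_append, hxy]
      omega
    · have : t.count a ≤ t.count x := by
        by_contra h
        exact hlast a (heq (by omega)) a (by simp) rfl
      simp [count_append, hxy.symm]
      omega

theorem getLast?_eq_some_of_isChain_ne_of_count_lt {x y : V} {l : List V}
    (hl : ∀ a ∈ l, a = x ∨ a = y) (hc : l.IsChain (· ≠ ·)) (hxy : l.count x < l.count y) :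
    l.getLast? = some y := by
  have hne : x ≠ y := by rintro rfl; exact hxy.false
  obtain ⟨hle, hlast⟩ := count_le_count_add_one_and_getLast?_of_isChain_ne hne hl hc
  exact hlast (by omega)

theorem exists_mem_forall_getLast?_filter_eq {S : Finset V} (hS : S.Nonempty) {W : List V}
    (hSW : ∀ v ∈ S, v ∈ W) :
    ∃ z ∈ S, ∀ y ∈ S, y ≠ z → (W.filter (fun a => a = z ∨ a = y)).getLast? = some y := by
  induction W using List.reverseRecOn generalizing S with
  | nil => simpa using hSW _ hS.choose_spec
  | append_singleton W a ih =>
    by_cases ha : a ∈ S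
    · rcases (S.erase a).eq_empty_or_nonempty with h | h
      · refine ⟨a, ha, fun y hy hya => ?_⟩
        simpa [h] using Finset.mem_erase.mpr ⟨hya, hy⟩
      · obtain ⟨z, hz, hzlast⟩ := ih h fun v hv => by
          simpa [Finset.ne_of_mem_erase hv] using hSW v (Finset.mem_of_mem_erase hv)
        refine ⟨z, Finset.mem_of_mem_erase hz, fun y hy hyz => ?_⟩
        by_cases hya : y = a
        · simp [filter_append, hya]
        · have hza : z ≠ a := Finset.ne_of_mem_erase hz
          simpa [filter_append, Ne.symm hza, Ne.symm hya] using
            hzlast y (Finset.mem_erase.mpr ⟨hya, hy⟩) hyz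
    · obtain ⟨z, hz, hzlast⟩ := ih hS fun v hv => by
        simpa [show v ≠ a by rintro rfl; exact ha hv] using hSW v hv
      refine ⟨z, hz, fun y hy hyz => ?_⟩
      have hza : a ≠ z := by rintro rfl; exact ha hz
      have hya : a ≠ y := by rintro rfl; exact ha hy
      simpa [filter_append, hza, hya] using hzlast y hy hyz

end List

namespace WordRepresents

variable {V : Type*} [DecidableEq V] {G : SimpleGraph V}

theorem append_singleton {W : List V} (hW : WordRepresents W G) {z : V}
    (hz : ∀ y, G.Adj z y → (W.filter (fun a => a = z ∨ a = y)).getLast? = some y) :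
    WordRepresents (W ++ [z]) G := by
  have hzy : ∀ y, z ≠ y →
      (((W ++ [z]).filter (fun a => a = z ∨ a = y)).IsChain (· ≠ ·) ↔ G.Adj z y) := by
    intro y hzy
    simp only [List.filter_append, List.filter_singleton, decide_true, true_or, cond_true,
      List.isChain_append, List.isChain_singleton, true_and]
    refine ⟨fun h => (hW z y hzy).mp h.1, fun h => ⟨(hW z y hzy).mpr h, ?_⟩⟩
    rw [hz y h]
    simpa using hzy.symm
  intro x y hxy
  by_cases hx : z = x
  · subst hx
    exact hzy y hxy
  by_cases hy : z = y
  · subst hy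
    rw [G.adj_comm, ← hzy x (Ne.symm hxy)]
    simp only [or_comm]
    rfl
  · simpa [List.filter_append, hx, hy] using hW x y hxy

theorem exists_append_singleton {W : List V} (hW : WordRepresents W G) (hmem : ∀ v, v ∈ W)
    {k : ℕ} {v : V} (hv : W.count v < k) :
    ∃ z, W.count z < k ∧ WordRepresents (W ++ [z]) G := by
  set S := W.toFinset.filter (fun u => W.count u < k)
  obtain ⟨z, hzS, hzlast⟩ :=
    List.exists_mem_forall_getLast?_filter_eq (S := S) ⟨v, by simp [S, hmem, hv]⟩ fun u _ => hmem u
  have hz : W.count z < k := (Finset.mem_filter.mp hzS).2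
  refine ⟨z, hz, hW.append_singleton fun y hadj => ?_⟩
  by_cases hy : W.count y < k
  · exact hzlast y (by simp [S, hmem, hy]) (G.ne_of_adj hadj).symm
  have hcount : ∀ u, u = z ∨ u = y → (W.filter (fun a => a = z ∨ a = y)).count u = W.count u :=
    fun u hu => List.count_filter (by simpa using hu)
  refine List.getLast?_eq_some_of_isChain_ne_of_count_lt (x := z) (by simp)
    ((hW z y (G.ne_of_adj hadj)).mpr hadj) ?_
  rw [hcount z (.inl rfl), hcount y (.inr rfl)]
  omega

theorem exists_count_eq [Fintype V] {W : List V} (hW : WordRepresents W G) (hmem : ∀ v, v ∈ W)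
    {k : ℕ} (hle : ∀ v, W.count v ≤ k) :
    ∃ W' : List V, WordRepresents W' G ∧ ∀ v, W'.count v = k := by
  by_cases hk : ∀ v, W.count v = k
  · exact ⟨W, hW, hk⟩
  push Not at hk
  obtain ⟨v, hv⟩ := hk
  obtain ⟨z, hz, hWz⟩ := hW.exists_append_singleton hmem (lt_of_le_of_ne (hle v) hv)
  have hcount : ∀ u, (W ++ [z]).count u = W.count u + if z = u then 1 else 0 := fun u => by
    simp [List.count_append, List.count_singleton]
  refine hWz.exists_count_eq (fun u => List.mem_append_left _ (hmem u)) fun u => ?_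
  rw [hcount]
  split_ifs with h
  · exact h ▸ hz
  · exact hle u
termination_by ∑ v, (k - W.count v)
decreasing_by
  refine Finset.sum_lt_sum (fun u _ => ?_) ⟨z, Finset.mem_univ z, ?_⟩
  · rw [hcount]
    exact Nat.sub_le_sub_left (Nat.le_add_right _ _) k
  · rw [hcount, if_pos rfl]
    omega

end WordRepresents

/-- A graph `G` is word-representable (some word containing every letter at least once
represents it) iff it is `k`-word-representable for some `k ≥ 1`. -/
theorem wordRepresentable_iff_kWordRepresentable {V : Type*} [Fintype V] [DecidableEq V]
    (G : SimpleGraph V) :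
    (∃ W : List V, (∀ v : V, v ∈ W) ∧ WordRepresents W G) ↔
      ∃ k : ℕ, 1 ≤ k ∧ ∃ W : List V, WordRepresents W G ∧ ∀ v : V, W.count v = k := by
  constructor
  · rintro ⟨W, hmem, hW⟩
    exact ⟨W.length + 1, by omega,
      hW.exists_count_eq hmem fun v => (W.count_le_length).trans (Nat.le_succ _)⟩
  · rintro ⟨k, hk, W, hW, hcount⟩
    exact ⟨W, fun v => List.count_pos_iff.mp (by rw [hcount]; omega), hW⟩
end

section
/- Every general d-word-representable graph is also general (d+1)-word-representable. -/
/-!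
Prefix `W` with every letter once, in decreasing order of first occurrence in `W`
(this is `W.reverse.dedup`). Any alternation in `W` gains one letter: prepend its second
letter, taken from the prefix. Conversely, an alternation in the new word uses at most two
letters of the prefix, since they are distinct. If it uses two, `c` then `e`, its part in `W`
starts with `c`; as the first `e` of `W` precedes the first `c`, the letter `e` can be moved
into `W`, so the alternation was at most one longer than one in `W`.
-/

/-- Letters `a` and `b` are `d`-intersecting in `W`: `W` contains an alternating
subsequence in the letters `a`, `b` of length at least `d + 2`. -/
def DIntersecting {V : Type*} (d : ℕ) (W : List V) (a b : V) : Prop :=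
  ∃ l : List V, l.Sublist W ∧ l.Chain' (· ≠ ·) ∧ (∀ c ∈ l, c = a ∨ c = b) ∧
    d + 2 ≤ l.length

/-- `W` general `d`-word-represents `G`: distinct letters are `d`-intersecting in `W`
iff they are adjacent in `G`. -/
def GenWordRepresents {V : Type*} (d : ℕ) (W : List V) (G : SimpleGraph V) : Prop :=
  ∀ x y : V, x ≠ y → (DIntersecting d W x y ↔ G.Adj x y)

section

open List

variable {V : Type*}

theorem exists_eq_append_cons_of_pair_sublist_dedup [DecidableEq V] {R : List V} {a b : V}
    (h : [b, a] <+ R.dedup) : ∃ p q, R = p ++ b :: q ∧ b ∉ q ∧ a ∈ q := by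
  induction R with
  | nil => simp at h
  | cons c R ih =>
    by_cases hc : c ∈ R
    · rw [dedup_cons_of_mem hc] at h
      obtain ⟨p, q, rfl, hbq, haq⟩ := ih h
      exact ⟨c :: p, q, rfl, hbq, haq⟩
    · rw [dedup_cons_of_notMem hc] at h
      cases h with
      | cons _ h =>
        obtain ⟨p, q, rfl, hbq, haq⟩ := ih h
        exact ⟨c :: p, q, rfl, hbq, haq⟩
      | cons_cons _ h => exact ⟨[], R, rfl, hc, mem_dedup.mp (singleton_sublist.mp h)⟩

theorem cons_cons_sublist_of_mem_of_notMem {s r t : List V} {a b : V} (hb : b ∉ s) (ha : a ∈ s)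
    (ht : b :: t <+ s ++ b :: r) : a :: b :: t <+ s ++ b :: r := by
  obtain ⟨u, v, huv, hu, hv⟩ := sublist_append_iff.mp ht
  obtain rfl : u = [] := by
    rcases u with _ | ⟨c, u⟩
    · rfl
    · obtain rfl : c = b := (cons_eq_cons.mp huv).1.symm
      exact absurd (hu.subset mem_cons_self) hb
  subst huv
  exact (singleton_sublist.mpr ha).append hv

theorem cons_cons_sublist_of_pair_sublist_reverse_dedup [DecidableEq V] {W t : List V} {a b : V}
    (h : [b, a] <+ W.reverse.dedup) (ht : b :: t <+ W) : a :: b :: t <+ W := by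
  obtain ⟨p, q, hR, hbq, haq⟩ := exists_eq_append_cons_of_pair_sublist_dedup h
  have hW : W = q.reverse ++ b :: p.reverse := by
    simpa using congrArg reverse hR
  rw [hW] at ht ⊢
  exact cons_cons_sublist_of_mem_of_notMem (by simpa using hbq) (by simpa using haq) ht

theorem length_le_two_of_nodup {l : List V} {x y : V} (hl : l.Nodup)
    (hmem : ∀ c ∈ l, c = x ∨ c = y) : l.length ≤ 2 := by
  classical
  calc l.length = l.toFinset.card := (toFinset_card_of_nodup hl).symm
    _ ≤ ({x, y} : Finset V).card :=
      Finset.card_le_card fun c hc => by simpa using hmem c (by simpa using hc)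
    _ ≤ 2 := Finset.card_le_two

theorem dIntersecting_of_suffix {d : ℕ} {W l m : List V} {x y : V} (hl : l.IsChain (· ≠ ·))
    (hmem : ∀ c ∈ l, c = x ∨ c = y) (hml : m <:+ l) (hmW : m <+ W) (hlen : d + 2 ≤ m.length) :
    DIntersecting d W x y :=
  ⟨m, hmW, hl.suffix hml, fun c hc => hmem c (hml.subset hc), hlen⟩

theorem DIntersecting.succ_append {d : ℕ} {P W : List V} {x y : V} (hP : ∀ c ∈ W, c ∈ P)
    (h : DIntersecting d W x y) : DIntersecting (d + 1) (P ++ W) x y := by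
  obtain ⟨l, hsub, hchain, hmem, hlen⟩ := h
  obtain ⟨p, q, r, rfl⟩ : ∃ p q r, l = p :: q :: r := by
    rcases l with _ | ⟨p, _ | ⟨q, r⟩⟩ <;> simp at hlen; exact ⟨p, q, r, rfl⟩
  refine ⟨q :: p :: q :: r, ?_, ?_, ?_, by simpa using hlen⟩
  · exact (singleton_sublist.mpr (hP q (hsub.subset (by simp)))).append hsub
  · exact isChain_cons_cons.mpr ⟨(isChain_cons_cons.mp hchain).1.symm, hchain⟩
  · exact forall_mem_cons.mpr ⟨hmem q (by simp), hmem⟩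

theorem DIntersecting.of_succ_append {d : ℕ} {P W : List V} {x y : V} (hP : P.Nodup)
    (hPW : ∀ a b t, [b, a] <+ P → b :: t <+ W → a :: b :: t <+ W)
    (h : DIntersecting (d + 1) (P ++ W) x y) : DIntersecting d W x y := by
  obtain ⟨l, hsub, hchain, hmem, hlen⟩ := h
  obtain ⟨l₁, l₂, rfl, h₁, h₂⟩ := sublist_append_iff.mp hsub
  have hlen₁ : l₁.length ≤ 2 :=
    length_le_two_of_nodup (hP.sublist h₁) fun c hc => hmem c (mem_append_left _ hc)
  simp only [length_append] at hlen
  match l₁, l₂, h₁, h₂ with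
  | [], l₂, _, h₂ | [_], l₂, _, h₂ =>
    exact dIntersecting_of_suffix hchain hmem (suffix_append _ _) h₂ (by simp at hlen; omega)
  | [_, _], [], _, _ => simp at hlen
  | [c, e], f :: t, h₁, h₂ =>
    obtain rfl : f = c := by
      have hce := (isChain_cons_cons.mp hchain).1
      have hef := (isChain_cons_cons.mp (isChain_cons_cons.mp hchain).2).1
      rcases hmem c (by simp) with rfl | rfl <;> rcases hmem e (by simp) with rfl | rfl <;>
        rcases hmem f (by simp) with rfl | rfl <;> tauto
    exact dIntersecting_of_suffix hchain hmem (suffix_cons _ _) (hPW e f t h₁ h₂)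
      (by simp at hlen ⊢; omega)

theorem dIntersecting_succ_reverse_dedup_append_iff [DecidableEq V] {d : ℕ} {W : List V}
    {x y : V} : DIntersecting (d + 1) (W.reverse.dedup ++ W) x y ↔ DIntersecting d W x y :=
  ⟨.of_succ_append (nodup_dedup _) fun _ _ _ => cons_cons_sublist_of_pair_sublist_reverse_dedup,
    .succ_append (by simp)⟩

end

/-- Every general `d`-word-representable graph is general `(d+1)`-word-representable. -/
theorem genWordRepresentable_succ {V : Type*} (G : SimpleGraph V) (d : ℕ)
    (h : ∃ W : List V, GenWordRepresents d W G) :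
    ∃ W : List V, GenWordRepresents (d + 1) W G := by
  classical
  obtain ⟨W, hW⟩ := h
  exact ⟨W.reverse.dedup ++ W, fun x y hxy =>
    dIntersecting_succ_reverse_dedup_append_iff.trans (hW x y hxy)⟩
end

section
/- Every finite graph G = (V,E) with m = |E| edges is general d-word-representable for every d ≥ m − 1. Concretely, the concatenation W = W₁W₂⋯W_m, where W_i is an alternating word of length d + 2 in the two letters of the i-th edge e_i, is a general d-word-representant of G. -/
/-- The alternating word `abab…` of length `n` in the letters `a`, `b`. -/
def altWord {V : Type*} (a b : V) (n : ℕ) : List V :=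
  (List.range n).map (fun k => if k % 2 = 0 then a else b)

/-
If `x` and `y` are not joined by an edge, no block `W_i` contains both letters, so an alternating
subsequence in `{x, y}` takes at most one letter from each block and has length at most
`m ≤ d + 1`. If `{x, y}` is the edge `e_i`, the block `W_i` itself is an alternating subsequence
of length `d + 2`.
-/

namespace List

variable {α : Type*}

theorem length_le_one_of_isChain_ne {l : List α} (hc : l.IsChain (· ≠ ·))
    (h : ∀ a ∈ l, ∀ b ∈ l, a = b) : l.length ≤ 1 := by
  match l, hc with
  | [], _ | [_], _ => simp
  | a :: b :: _, hc => exact absurd (h a (by simp) b (by simp)) (isChain_cons_cons.mp hc).1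

theorem length_le_length_of_sublist_flatten {L : List (List α)} {l : List α}
    (hs : l <+ L.flatten) (hc : l.IsChain (· ≠ ·))
    (hL : ∀ w ∈ L, ∀ a ∈ w, ∀ b ∈ w, a ∈ l → b ∈ l → a = b) : l.length ≤ L.length := by
  induction L generalizing l with
  | nil => simp_all
  | cons w L ih =>
    obtain ⟨l₁, l₂, rfl, hs₁, hs₂⟩ := sublist_append_iff.mp (flatten_cons ▸ hs)
    obtain ⟨hc₁, hc₂, -⟩ := isChain_append.mp hc
    have hl₁ : l₁.length ≤ 1 := length_le_one_of_isChain_ne hc₁ fun a ha b hb =>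
      hL w mem_cons_self a (hs₁.subset ha) b (hs₁.subset hb) (mem_append_left _ ha)
        (mem_append_left _ hb)
    have hl₂ : l₂.length ≤ L.length := ih hs₂ hc₂ fun w' hw' a ha b hb ha' hb' =>
      hL w' (mem_cons_of_mem _ hw') a ha b hb (mem_append_right _ ha') (mem_append_right _ hb')
    simp only [length_append, length_cons]
    omega

end List

section altWord

variable {V : Type*} {a b : V} {n : ℕ}

@[simp]
theorem length_altWord (a b : V) (n : ℕ) : (altWord a b n).length = n := by
  simp [altWord]

theorem eq_or_eq_of_mem_altWord {c : V} (h : c ∈ altWord a b n) : c = a ∨ c = b := by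
  obtain ⟨k, -, rfl⟩ := List.mem_map.mp h
  split_ifs <;> simp

theorem isChain_altWord (hab : a ≠ b) : (altWord a b n).IsChain (· ≠ ·) := by
  refine List.isChain_iff_getElem.mpr fun i hi => ?_
  simp only [altWord, List.getElem_map, List.getElem_range]
  rcases Nat.mod_two_eq_zero_or_one i with h | h
  · simp [h, Nat.succ_mod_two_eq_one_iff.mpr h, hab]
  · simp [h, Nat.succ_mod_two_eq_zero_iff.mpr h, hab.symm]

theorem eq_of_mem_altWord {x y c c' : V} (hab : ¬((a = x ∧ b = y) ∨ (a = y ∧ b = x)))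
    (hc : c ∈ altWord a b n) (hc' : c' ∈ altWord a b n) (hcxy : c = x ∨ c = y)
    (hc'xy : c' = x ∨ c' = y) : c = c' := by
  have hcab := eq_or_eq_of_mem_altWord hc
  have hc'ab := eq_or_eq_of_mem_altWord hc'
  grind

end altWord

section DIntersecting

variable {V : Type*} {d : ℕ} {W W' : List V} {a b : V}

theorem DIntersecting.symm (h : DIntersecting d W a b) : DIntersecting d W b a := by
  obtain ⟨l, hs, hc, hm, hlen⟩ := h
  exact ⟨l, hs, hc, fun c hc => (hm c hc).symm, hlen⟩

theorem DIntersecting.mono (hW : W.Sublist W') (h : DIntersecting d W a b) :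
    DIntersecting d W' a b := by
  obtain ⟨l, hs, hc, hm, hlen⟩ := h
  exact ⟨l, hs.trans hW, hc, hm, hlen⟩

theorem dIntersecting_altWord (hab : a ≠ b) : DIntersecting d (altWord a b (d + 2)) a b :=
  ⟨_, List.Sublist.refl _, isChain_altWord hab, fun _ => eq_or_eq_of_mem_altWord, by simp⟩

end DIntersecting

theorem genWordRepresentable_of_edgeList_general {V : Type*} (G : SimpleGraph V)
    (es : List (V × V))
    (h3 : ∀ x y : V, x ≠ y → (G.Adj x y ↔
      ∃ p ∈ es, (p.1 = x ∧ p.2 = y) ∨ (p.1 = y ∧ p.2 = x)))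
    (d : ℕ) (hd : es.length - 1 ≤ d) :
    GenWordRepresents d ((es.map (fun p => altWord p.1 p.2 (d + 2))).flatten) G := by
  intro x y hxy
  rw [h3 x y hxy]
  constructor
  · rintro ⟨l, hs, hc, hm, hlen⟩
    by_contra hno
    have hblocks := List.length_le_length_of_sublist_flatten hs hc <| by
      simp only [List.mem_map]
      rintro _ ⟨p, hp, rfl⟩ c hc c' hc' hcl hc'l
      exact eq_of_mem_altWord (fun h => hno ⟨p, hp, h⟩) hc hc' (hm c hcl) (hm c' hc'l)
    rw [List.length_map] at hblocks
    omega
  · rintro ⟨p, hp, ⟨rfl, rfl⟩ | ⟨rfl, rfl⟩⟩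
    all_goals
      refine DIntersecting.mono (List.sublist_flatten_of_mem (List.mem_map_of_mem hp)) ?_
    · exact dIntersecting_altWord hxy
    · exact (dIntersecting_altWord hxy.symm).symm

/-- Every finite graph `G` with `m` edges, listed as pairs `es` (each edge occurring exactly
once), is general `d`-word-representable for every `d ≥ m - 1`; concretely, the concatenation
of alternating words of length `d + 2`, one in the two letters of each edge, is a general
`d`-word-representant of `G`. -/
theorem genWordRepresentable_of_edgeList {V : Type*} (G : SimpleGraph V)
    (es : List (V × V))
    (h1 : ∀ p ∈ es, p.1 ≠ p.2)
    (h2 : es.Pairwise (fun p q => ¬(p = q ∨ p = (q.2, q.1))))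
    (h3 : ∀ x y : V, x ≠ y → (G.Adj x y ↔
      ∃ p ∈ es, (p.1 = x ∧ p.2 = y) ∨ (p.1 = y ∧ p.2 = x)))
    (d : ℕ) (hd : es.length - 1 ≤ d) :
    GenWordRepresents d ((es.map (fun p => altWord p.1 p.2 (d + 2))).flatten) G :=
  genWordRepresentable_of_edgeList_general G es h3 d hd
end

section
/- In the concatenated word W = W₁W₂⋯W_m, where each W_i is an alternating word of length L in a two-letter alphabet e_i and the e_i are pairwise distinct 2-element sets, any alternating subsequence of W in letters {x,y} with {x,y} ∉ {e₁,…,e_m} has length at most m. -/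
/-! Each block `W_i` only contains the letters of `e_i`, and `e_i` shares at most one letter with
`{x, y}`; an alternating word in `{x, y}` never repeats a letter consecutively, so a subsequence
of this kind takes at most one letter from each block. -/

namespace List

variable {α β : Type*}

theorem Forall₂.exists_mem_left_of_mem_right {R : α → β → Prop} {l₁ : List α} {l₂ : List β}
    (h : Forall₂ R l₁ l₂) {b : β} (hb : b ∈ l₂) : ∃ a ∈ l₁, R a b := by
  induction h with
  | nil => simp at hb
  | @cons a b' _ _ hab _ ih =>
    rcases mem_cons.mp hb with rfl | hb
    · exact ⟨a, mem_cons_self, hab⟩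
    · obtain ⟨a', ha', hR⟩ := ih hb
      exact ⟨a', mem_cons_of_mem _ ha', hR⟩

theorem length_le_length_of_sublist_flatten_s6 {Q : List α → Prop}
    (hQ : ∀ l₁ l₂, Q (l₁ ++ l₂) → Q l₁ ∧ Q l₂) {Bs : List (List α)}
    (hBs : ∀ B ∈ Bs, ∀ l, l <+ B → Q l → l.length ≤ 1) :
    ∀ l, l <+ Bs.flatten → Q l → l.length ≤ Bs.length := by
  induction Bs with
  | nil => simp
  | cons B Bs ih =>
    intro l hl hQl
    obtain ⟨l₁, l₂, rfl, hl₁, hl₂⟩ := sublist_append_iff.mp (flatten_cons ▸ hl)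
    have hQ₁₂ := hQ l₁ l₂ hQl
    have h₁ := hBs B mem_cons_self l₁ hl₁ hQ₁₂.1
    have h₂ := ih (fun B' hB' => hBs B' (mem_cons_of_mem _ hB')) l₂ hl₂ hQ₁₂.2
    simp only [length_append, length_cons]
    omega

end List

section AlternatingWords

variable {V : Type*}

def IsAlternatingIn (x y : V) (l : List V) : Prop :=
  l.IsChain (· ≠ ·) ∧ ∀ c ∈ l, c = x ∨ c = y

theorem IsAlternatingIn.of_append {x y : V} {l₁ l₂ : List V}
    (h : IsAlternatingIn x y (l₁ ++ l₂)) : IsAlternatingIn x y l₁ ∧ IsAlternatingIn x y l₂ := by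
  obtain ⟨hchain, hmem⟩ := h
  rw [List.isChain_append] at hchain
  exact ⟨⟨hchain.1, fun c hc => hmem c (List.mem_append_left _ hc)⟩,
    ⟨hchain.2.1, fun c hc => hmem c (List.mem_append_right _ hc)⟩⟩

theorem pair_eq_of_ne_of_mem_pair {a b x y u v : V} (hab : a ≠ b)
    (ha : a = x ∨ a = y) (hb : b = x ∨ b = y) (ha' : a = u ∨ a = v) (hb' : b = u ∨ b = v) :
    (u = x ∧ v = y) ∨ (u = y ∧ v = x) := by
  grind

theorem IsAlternatingIn.length_le_one_of_sublist {x y u v : V} {B l : List V}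
    (hB : ∀ c ∈ B, c = u ∨ c = v) (hne : ¬((u = x ∧ v = y) ∨ (u = y ∧ v = x)))
    (hl : l.Sublist B) (halt : IsAlternatingIn x y l) : l.length ≤ 1 := by
  match l, hl, halt with
  | [], _, _ | [_], _, _ => simp
  | a :: b :: _, hl, ⟨hchain, hmem⟩ =>
    exact absurd (pair_eq_of_ne_of_mem_pair (List.isChain_cons_cons.mp hchain).1
      (hmem a (by simp)) (hmem b (by simp)) (hB a (hl.subset (by simp)))
      (hB b (hl.subset (by simp)))) hne

end AlternatingWords

theorem alt_subseq_le_blocks_general {V : Type*} (es : List (V × V)) (Bs : List (List V)) (L : ℕ)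
    (hB : List.Forall₂ (fun (p : V × V) (B : List V) =>
      B.length = L ∧ B.Chain' (· ≠ ·) ∧ ∀ c ∈ B, c = p.1 ∨ c = p.2) es Bs)
    (x y : V)
    (hnot : ∀ p ∈ es, ¬((p.1 = x ∧ p.2 = y) ∨ (p.1 = y ∧ p.2 = x))) :
    ∀ l : List V, l.Sublist Bs.flatten → l.Chain' (· ≠ ·) → (∀ c ∈ l, c = x ∨ c = y) →
      l.length ≤ es.length := by
  intro l hl hchain hmem
  rw [hB.length_eq]
  refine List.length_le_length_of_sublist_flatten_s6 (fun _ _ => IsAlternatingIn.of_append)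
    ?_ l hl ⟨hchain, hmem⟩
  intro B hBmem
  obtain ⟨p, hp, -, -, hBp⟩ := hB.exists_mem_left_of_mem_right hBmem
  exact fun _ => IsAlternatingIn.length_le_one_of_sublist hBp (hnot p hp)

/-- In the concatenation `W = W₁ ⋯ W_m` of blocks `W_i`, where `W_i` is an alternating word
of length `L` over the two-letter alphabet `e_i` and the `e_i` are pairwise distinct
2-element sets, every alternating subsequence of `W` in letters `{x, y}` with `{x, y}`
different from all `e_i` has length at most `m`. -/
theorem alt_subseq_le_blocks {V : Type*} (es : List (V × V)) (Bs : List (List V)) (L : ℕ)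
    (h1 : ∀ p ∈ es, p.1 ≠ p.2)
    (h2 : es.Pairwise (fun p q => ¬(p = q ∨ p = (q.2, q.1))))
    (hB : List.Forall₂ (fun (p : V × V) (B : List V) =>
      B.length = L ∧ B.Chain' (· ≠ ·) ∧ ∀ c ∈ B, c = p.1 ∨ c = p.2) es Bs)
    (x y : V) (hxy : x ≠ y)
    (hnot : ∀ p ∈ es, ¬((p.1 = x ∧ p.2 = y) ∨ (p.1 = y ∧ p.2 = x))) :
    ∀ l : List V, l.Sublist Bs.flatten → l.Chain' (· ≠ ·) → (∀ c ∈ l, c = x ∨ c = y) →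
      l.length ≤ es.length :=
  alt_subseq_le_blocks_general es Bs L hB x y hnot
end

section
/- A graph G (with at least 2 vertices) is a polygon-circle graph if and only if G is general 2-word-representable. -/
/-- `a, b, c, d` occur in this cyclic order on the circle `Fin n`. -/
def CyclicOrder4 {n : ℕ} (a b c d : Fin n) : Prop :=
  (a < b ∧ b < c ∧ c < d) ∨ (b < c ∧ c < d ∧ d < a) ∨
  (c < d ∧ d < a ∧ a < b) ∨ (d < a ∧ a < b ∧ b < c)

/-- `G` is a polygon-circle graph: it is the intersection graph of a family of (nonempty,
vertex-disjoint) convex polygons inscribed in a circle, two polygons intersecting iff their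
vertex sets interleave on the circle. -/
def IsPolygonCircle {V : Type*} (G : SimpleGraph V) : Prop :=
  ∃ (n : ℕ) (P : V → Finset (Fin n)),
    (∀ v, (P v).Nonempty) ∧
    (∀ u v : V, u ≠ v → Disjoint (P u) (P v)) ∧
    (∀ x y : V, x ≠ y → (G.Adj x y ↔
      ∃ a ∈ P x, ∃ c ∈ P x, ∃ b ∈ P y, ∃ d ∈ P y, CyclicOrder4 a b c d))

/-!
Cutting the circle at the point `0` turns a family of disjoint polygons into a word: read the
points in increasing order and write down, at each point, the polygon it belongs to. Conversely,
the sets of positions of the letters of a word are disjoint polygons on a circle with one point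
per position. Under either translation, the vertex sets of two polygons interleave on the circle
iff the word has a subsequence `xyxy` or `yxyx`, because the four cyclic rotations of
`a < b < c < d` give exactly these two linear patterns. Every vertex needs a nonempty polygon, so
letters missing from a word are first appended once each; this creates no alternation, since each
letter of `xyxy` occurs twice in it.
-/

open Function

namespace List

variable {α β : Type*}

theorem sublist_finRange_iff {n : ℕ} {l : List (Fin n)} :
    l <+ finRange n ↔ l.Pairwise (· < ·) :=
  ⟨fun h => (pairwise_lt_finRange n).sublist h, fun h =>
    sublist_of_subperm_of_pairwise (h.nodup.subperm fun _ _ => mem_finRange _) h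
      (pairwise_lt_finRange n)⟩

theorem exists_sublist_map_eq_map_some_filterMap (f : α → Option β) (l : List α) :
    ∃ l', l' <+ l ∧ l'.map f = (l.filterMap f).map some := by
  induction l with
  | nil => exact ⟨[], .slnil, rfl⟩
  | cons a l ih =>
    obtain ⟨l', hl', hmap⟩ := ih
    rcases hfa : f a with _ | b
    · exact ⟨l', hl'.cons a, by simp [hfa, hmap]⟩
    · exact ⟨a :: l', hl'.cons_cons a, by simp [hfa, hmap]⟩

theorem sublist_filterMap_iff_exists_map {f : α → Option β} {l : List α} {s : List β} :
    s <+ l.filterMap f ↔ ∃ l', l' <+ l ∧ l'.map f = s.map some := by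
  constructor
  · intro h
    obtain ⟨l₀, hl₀, rfl⟩ := sublist_filterMap_iff.mp h
    obtain ⟨l', hl', hmap⟩ := exists_sublist_map_eq_map_some_filterMap f l₀
    exact ⟨l', hl'.trans hl₀, hmap⟩
  · rintro ⟨l', hl', hmap⟩
    have : l'.filterMap f = s := by
      simpa [filterMap_map] using congrArg (filterMap id) hmap
    exact this ▸ hl'.filterMap f

theorem sublist_append_iff_of_forall_one_lt_count [DecidableEq α] {s W L : List α}
    (hL : L.Nodup) (hWL : W.Disjoint L) (hs : ∀ v ∈ s, 1 < s.count v) :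
    s <+ W ++ L ↔ s <+ W := by
  refine ⟨fun h => ?_, fun h => h.trans (sublist_append_left W L)⟩
  have hsL : ∀ v ∈ s, v ∉ L := fun v hv hvL => by
    have hle := h.count_le v
    rw [count_append, count_eq_zero.mpr fun hvW => hWL hvW hvL] at hle
    have := nodup_iff_count_le_one.mp hL v
    have := hs v hv
    omega
  obtain ⟨l₁, l₂, rfl, h₁, h₂⟩ := sublist_append_iff.mp h
  rwa [eq_nil_iff_forall_not_mem.mpr fun v hv => hsL v (by simp [hv]) (h₂.subset hv),
    append_nil]

theorem sublist_filterMap_finRange_iff {n : ℕ} {f : Fin n → Option β} {a b c d : β} :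
    [a, b, c, d] <+ (finRange n).filterMap f ↔
      ∃ p₁ p₂ p₃ p₄, p₁ < p₂ ∧ p₂ < p₃ ∧ p₃ < p₄ ∧
        f p₁ = some a ∧ f p₂ = some b ∧ f p₃ = some c ∧ f p₄ = some d := by
  rw [sublist_filterMap_iff_exists_map]
  constructor
  · rintro ⟨l, hl, hmap⟩
    simp only [map_cons, map_nil, map_eq_cons_iff, map_eq_nil_iff] at hmap
    obtain ⟨p₁, _, rfl, h₁, p₂, _, rfl, h₂, p₃, _, rfl, h₃, p₄, _, rfl, h₄, rfl⟩ := hmap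
    have := sublist_finRange_iff.mp hl
    simp only [pairwise_cons, mem_cons] at this
    exact ⟨p₁, p₂, p₃, p₄, by grind, by grind, by grind, h₁, h₂, h₃, h₄⟩
  · rintro ⟨p₁, p₂, p₃, p₄, h₁₂, h₂₃, h₃₄, h₁, h₂, h₃, h₄⟩
    refine ⟨[p₁, p₂, p₃, p₄], sublist_finRange_iff.mpr ?_, by simp [h₁, h₂, h₃, h₄]⟩
    simp only [pairwise_cons, mem_cons]
    grind

end List

theorem Pairwise.exists_eq_some_iff_mem {ι V : Type*} {P : V → Finset ι}
    (h : Pairwise (Disjoint on P)) : ∃ f : ι → Option V, ∀ i v, f i = some v ↔ i ∈ P v := by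
  classical
  refine ⟨fun i => if hi : ∃ v, i ∈ P v then some hi.choose else none, fun i v => ?_⟩
  dsimp only
  split_ifs with hi
  · refine ⟨fun hv => Option.some_injective _ hv ▸ hi.choose_spec, fun hv => congrArg some ?_⟩
    by_contra hne
    exact Finset.disjoint_left.mp (h hne) hi.choose_spec hv
  · exact ⟨nofun, fun hv => hi ⟨v, hv⟩⟩

open List

theorem dIntersecting_two_iff {V : Type*} {W : List V} {x y : V} (hxy : x ≠ y) :
    DIntersecting 2 W x y ↔ [x, y, x, y] <+ W ∨ [y, x, y, x] <+ W := by
  constructor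
  · rintro ⟨l, hsub, hchain, hmem, hlen⟩
    obtain ⟨a, b, c, d, hl⟩ := length_eq_four.mp (l.length_take_of_le hlen)
    have hsub4 : [a, b, c, d] <+ W := hl ▸ (l.take_sublist 4).trans hsub
    have hchain4 : [a, b, c, d].IsChain (· ≠ ·) := hl ▸ hchain.take 4
    have hmem4 : ∀ e ∈ [a, b, c, d], e = x ∨ e = y :=
      hl ▸ fun e he => hmem e ((l.take_sublist 4).subset he)
    simp only [isChain_cons_cons, isChain_singleton, and_true] at hchain4
    simp only [mem_cons, forall_eq_or_imp] at hmem4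
    obtain ⟨ha | rfl | rfl, hb | rfl | rfl, hc | rfl | rfl, hd | rfl | rfl⟩ := hmem4 <;> simp_all
  · rintro (h | h) <;> refine ⟨_, h, ?_, by simp, le_rfl⟩ <;>
      exact show List.IsChain _ _ by simp [hxy, hxy.symm]

theorem exists_cyclicOrder4_iff {n : ℕ} (X Y : Finset (Fin n)) :
    (∃ a ∈ X, ∃ c ∈ X, ∃ b ∈ Y, ∃ d ∈ Y, CyclicOrder4 a b c d) ↔
      (∃ p₁ p₂ p₃ p₄, p₁ < p₂ ∧ p₂ < p₃ ∧ p₃ < p₄ ∧ p₁ ∈ X ∧ p₂ ∈ Y ∧ p₃ ∈ X ∧ p₄ ∈ Y) ∨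
      (∃ p₁ p₂ p₃ p₄, p₁ < p₂ ∧ p₂ < p₃ ∧ p₃ < p₄ ∧ p₁ ∈ Y ∧ p₂ ∈ X ∧ p₃ ∈ Y ∧ p₄ ∈ X) := by
  constructor
  · rintro ⟨a, ha, c, hc, b, hb, d, hd, ⟨h₁, h₂, h₃⟩ | ⟨h₁, h₂, h₃⟩ | ⟨h₁, h₂, h₃⟩ | ⟨h₁, h₂, h₃⟩⟩
    · exact .inl ⟨a, b, c, d, h₁, h₂, h₃, ha, hb, hc, hd⟩
    · exact .inr ⟨b, c, d, a, h₁, h₂, h₃, hb, hc, hd, ha⟩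
    · exact .inl ⟨c, d, a, b, h₁, h₂, h₃, hc, hd, ha, hb⟩
    · exact .inr ⟨d, a, b, c, h₁, h₂, h₃, hd, ha, hb, hc⟩
  · rintro (⟨p₁, p₂, p₃, p₄, h₁₂, h₂₃, h₃₄, h₁, h₂, h₃, h₄⟩ |
      ⟨p₁, p₂, p₃, p₄, h₁₂, h₂₃, h₃₄, h₁, h₂, h₃, h₄⟩)
    · exact ⟨p₁, h₁, p₃, h₃, p₂, h₂, p₄, h₄, .inl ⟨h₁₂, h₂₃, h₃₄⟩⟩
    · exact ⟨p₂, h₂, p₄, h₄, p₃, h₃, p₁, h₁, .inr <| .inr <| .inr ⟨h₁₂, h₂₃, h₃₄⟩⟩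

theorem dIntersecting_filterMap_finRange_iff {V : Type*} {n : ℕ} {f : Fin n → Option V}
    {P : V → Finset (Fin n)} (hf : ∀ i v, f i = some v ↔ i ∈ P v) {x y : V} (hxy : x ≠ y) :
    DIntersecting 2 ((finRange n).filterMap f) x y ↔
      ∃ a ∈ P x, ∃ c ∈ P x, ∃ b ∈ P y, ∃ d ∈ P y, CyclicOrder4 a b c d := by
  simp only [dIntersecting_two_iff hxy, sublist_filterMap_finRange_iff, hf,
    exists_cyclicOrder4_iff]

theorem IsPolygonCircle.exists_genWordRepresents {V : Type*} {G : SimpleGraph V}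
    (hG : IsPolygonCircle G) : ∃ W : List V, GenWordRepresents 2 W G := by
  obtain ⟨n, P, -, hdisj, hadj⟩ := hG
  obtain ⟨f, hf⟩ := Pairwise.exists_eq_some_iff_mem fun u v => hdisj u v
  exact ⟨(finRange n).filterMap f, fun x y hxy =>
    (dIntersecting_filterMap_finRange_iff hf hxy).trans (hadj x y hxy).symm⟩

theorem GenWordRepresents.exists_forall_mem {V : Type*} [Fintype V] {W : List V}
    {G : SimpleGraph V} (hW : GenWordRepresents 2 W G) :
    ∃ W' : List V, GenWordRepresents 2 W' G ∧ ∀ v, v ∈ W' := by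
  classical
  set L := (Finset.univ.filter (· ∉ W)).toList
  have hWL : W.Disjoint L := fun v hvW hvL => by simp_all [L]
  refine ⟨W ++ L, fun x y hxy => ?_, fun v => ?_⟩
  · have hfresh {a b : V} (hab : a ≠ b) : [a, b, a, b] <+ W ++ L ↔ [a, b, a, b] <+ W :=
      sublist_append_iff_of_forall_one_lt_count (Finset.nodup_toList _) hWL
        (by simp [hab, hab.symm])
    rw [← hW x y hxy, dIntersecting_two_iff hxy, dIntersecting_two_iff hxy, hfresh hxy,
      hfresh hxy.symm]
  · by_cases hv : v ∈ W <;> simp [L, hv]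

theorem GenWordRepresents.isPolygonCircle {V : Type*} {W : List V} {G : SimpleGraph V}
    (hW : GenWordRepresents 2 W G) (hmem : ∀ v, v ∈ W) : IsPolygonCircle G := by
  classical
  refine ⟨W.length, fun v => Finset.univ.filter (W.get · = v), fun v => ?_,
    fun u v huv => ?_, fun x y hxy => ?_⟩
  · obtain ⟨i, hi⟩ := mem_iff_get.mp (hmem v)
    exact ⟨i, by simpa using hi⟩
  · exact Finset.disjoint_filter.mpr fun i _ hu hv => huv (hu.symm.trans hv)
  · rw [← hW x y hxy]
    conv_lhs => rw [← map_get_finRange W, ← filterMap_eq_map]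
    apply dIntersecting_filterMap_finRange_iff _ hxy
    simp

theorem polygonCircle_iff_gen2WordRepresentable_general {V : Type*} [Fintype V]
    (G : SimpleGraph V) :
    IsPolygonCircle G ↔ ∃ W : List V, GenWordRepresents 2 W G :=
  ⟨IsPolygonCircle.exists_genWordRepresents, fun ⟨_, hW⟩ =>
    let ⟨_, hW', hmem⟩ := hW.exists_forall_mem
    hW'.isPolygonCircle hmem⟩

/-- A graph with at least two vertices is a polygon-circle graph iff it is general
`2`-word-representable. -/
theorem polygonCircle_iff_gen2WordRepresentable {V : Type*} [Fintype V]
    (G : SimpleGraph V) (hV : 2 ≤ Fintype.card V) :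
    IsPolygonCircle G ↔ ∃ W : List V, GenWordRepresents 2 W G :=
  polygonCircle_iff_gen2WordRepresentable_general G
end

section
/- If a word W general 2-word-represents a graph G, then every cyclic permutation (rotation) of W also general 2-word-represents G. -/
/-!
An alternation of even length starts and ends with different letters. So if it begins with the
first letter of `W`, moving that letter to the end of `W` (and of the alternation) leaves an
alternation of the same length in the rotated word; otherwise it survives the rotation untouched.
For odd lengths this fails (`xyx` versus `yxx`), hence the parity assumption below.
-/

namespace List

variable {V : Type*} {a b : V}

theorem IsChain.ne_tail_append_head_of_odd {p : V} {r : List V}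
    (hab : ∀ c ∈ p :: r, c = a ∨ c = b) (hr : Odd r.length) (hc : (p :: r).IsChain (· ≠ ·)) :
    (r ++ [p]).IsChain (· ≠ ·) := by
  induction r using twoStepInduction generalizing p with
  | nil => simp at hr
  | singleton q => simpa [eq_comm] using hc
  | cons_cons q p' s ih _ =>
    obtain ⟨hpq, hqp', hs⟩ : p ≠ q ∧ q ≠ p' ∧ (p' :: s).IsChain (· ≠ ·) := by simpa using hc
    have hp' : p' = p := by
      have := hab p (by simp); have := hab q (by simp); have := hab p' (by simp)
      grind
    subst hp'
    have hs_odd : Odd s.length := by simpa [parity_simps] using hr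
    have hs_ne : s ≠ [] := by rintro rfl; simp at hs_odd
    have hps : ([p'] ++ s ++ [p']).IsChain (· ≠ ·) :=
      IsChain.append_overlap hs
        (ih (fun c hc => hab c (mem_cons_of_mem _ (mem_cons_of_mem _ hc))) hs_odd hs) hs_ne
    simpa [hqp'] using hps

end List

section

variable {V : Type*} {d : ℕ} {W W' : List V} {a b : V}

theorem DIntersecting.exists_length_eq (h : DIntersecting d W a b) :
    ∃ l : List V, l.Sublist W ∧ l.IsChain (· ≠ ·) ∧ (∀ c ∈ l, c = a ∨ c = b) ∧
      l.length = d + 2 := by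
  obtain ⟨l, hsub, hc, hab, hlen⟩ := h
  exact ⟨l.take (d + 2), (l.take_sublist _).trans hsub, List.IsChain.take hc _,
    fun c hc => hab c (List.mem_of_mem_take hc), by simpa using hlen⟩

theorem DIntersecting.rotate_one (hd : Even d) (h : DIntersecting d W a b) :
    DIntersecting d (W.rotate 1) a b := by
  obtain ⟨l, hsub, hc, hab, hlen⟩ := h.exists_length_eq
  cases W with
  | nil => simpa using h
  | cons c T =>
    rw [List.rotate_cons_succ, List.rotate_zero]
    rcases List.sublist_cons_iff.mp hsub with hT | ⟨r, rfl, hr⟩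
    · exact ⟨l, hT.trans (List.sublist_append_left T [c]), hc, hab, hlen.ge⟩
    · have hr_len : r.length = d + 1 := by simpa using hlen
      refine ⟨r ++ [c], hr.append (List.Sublist.refl [c]),
        List.IsChain.ne_tail_append_head_of_odd hab (hr_len ▸ hd.add_one) hc, ?_, by simp [hr_len]⟩
      simpa [or_comm] using hab

theorem DIntersecting.of_isRotated (hd : Even d) (hW : W ~r W') (h : DIntersecting d W a b) :
    DIntersecting d W' a b := by
  obtain ⟨n, rfl⟩ := hW
  induction n with
  | zero => simpa using h
  | succ n ih => simpa [List.rotate_rotate] using ih.rotate_one hd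

end

/-- If `W` general `2`-word-represents a graph `G`, then every cyclic permutation
(rotation) of `W` also general `2`-word-represents `G`. -/
theorem gen2WordRepresents_rotate {V : Type*} (W : List V) (G : SimpleGraph V)
    (h : GenWordRepresents 2 W G) :
    ∀ k : ℕ, GenWordRepresents 2 (W.rotate k) G := by
  intro k x y hxy
  have hW : W.rotate k ~r W := List.IsRotated.forall W k
  rw [← h x y hxy]
  exact ⟨(·.of_isRotated even_two hW), (·.of_isRotated even_two hW.symm)⟩
end

section
/- In the bipartite construction word W = W₁⋯W_d (as in Theorem on bipartite graphs), for any two distinct vertices u_p, u_q ∈ U with {u_p, u_q} ∉ E, every alternating subsequence of W in letters {u_p, u_q} has length at most d + 1; hence u_p and u_q are not d-intersecting in W. -/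
/-- The block `F_i(u_j)`: an alternating word of length `d + 2` in the letters
`v_i, u_j` if `{v_i, u_j}` is an edge, and the empty word otherwise. -/
def bipBlock {d m : ℕ} (G : SimpleGraph (Fin d ⊕ Fin m)) [DecidableRel G.Adj]
    (i : Fin d) (j : Fin m) : List (Fin d ⊕ Fin m) :=
  if G.Adj (Sum.inl i) (Sum.inr j) then altWord (Sum.inl i) (Sum.inr j) (d + 2) else []

/-- The word `W_i = F_i(u_1)⋯F_i(u_m)` (increasing order of `j` for the first, third, …
block and decreasing order for the second, fourth, … block). -/
def bipRow {d m : ℕ} (G : SimpleGraph (Fin d ⊕ Fin m)) [DecidableRel G.Adj]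
    (i : Fin d) : List (Fin d ⊕ Fin m) :=
  ((if i.val % 2 = 0 then List.finRange m else (List.finRange m).reverse).map
    (bipBlock G i)).flatten

/-- The word `W = W₁W₂⋯W_d` of the bipartite construction. -/
def bipWord (d m : ℕ) (G : SimpleGraph (Fin d ⊕ Fin m)) [DecidableRel G.Adj] :
    List (Fin d ⊕ Fin m) :=
  ((List.finRange d).map (bipRow G)).flatten

/-!
Fix `p < q` and erase every letter other than `u_p, u_q` from `W`. Since `F_i(u_j)` only
contains `v_i` and `u_j`, what remains of a row `W_i` is `u_p^* u_q^*` when the row visits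
`U` in increasing order and `u_q^* u_p^*` when it visits it in decreasing order. The
orientation flips from one row to the next, so the last letter of a row equals the first
letter of the following one and the filtered word is a sublist of a word made of `d + 1`
constant runs. An alternating subsequence takes at most one letter from each run.
-/

namespace List

variable {α ι : Type*}

theorem IsChain.length_le_one_of_sublist_replicate {l : List α} {n : ℕ} {a : α}
    (hc : l.IsChain (· ≠ ·)) (h : l <+ replicate n a) : l.length ≤ 1 := by
  obtain ⟨k, -, rfl⟩ := sublist_replicate_iff.1 h
  match k, hc with
  | 0, _ | 1, _ => simp
  | k + 2, hc => simp [replicate_succ] at hc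

theorem IsChain.length_le_of_sublist_flatten_replicate {l : List α} {L : List (List α)}
    (hc : l.IsChain (· ≠ ·)) (h : l <+ L.flatten)
    (hL : ∀ r ∈ L, ∃ n a, r = replicate n a) :
    l.length ≤ L.length := by
  induction L generalizing l with
  | nil => simp_all
  | cons r L ih =>
    obtain ⟨l₁, l₂, rfl, h₁, h₂⟩ := sublist_append_iff.1 (flatten_cons ▸ h)
    obtain ⟨hc₁, hc₂, -⟩ := isChain_append.1 hc
    obtain ⟨n, a, rfl⟩ := hL r mem_cons_self
    have := hc₁.length_le_one_of_sublist_replicate h₁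
    have := ih hc₂ h₂ fun r hr => hL r (mem_cons_of_mem _ hr)
    simp only [length_append, length_cons]
    omega

/-- Consecutive rows `aᵢⁿ aᵢ₊₁ⁿ` share their boundary letter, so they glue into the
`k + 1` runs `a₀²ⁿ a₁²ⁿ ⋯ aₖ₋₁²ⁿ aₖⁿ`. -/
theorem flatten_ofFn_sublist_of_sublist_replicate_append (a : ℕ → α) (n : ℕ) :
    ∀ {k : ℕ} (R : Fin k → List α),
      (∀ i : Fin k, R i <+ replicate n (a i) ++ replicate n (a (i + 1))) →
      (ofFn R).flatten <+ (ofFn fun i : Fin k => replicate (2 * n) (a i)).flatten ++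
        replicate n (a k)
  | 0, _, _ => by simp
  | k + 1, R, hR => by
    have ih := flatten_ofFn_sublist_of_sublist_replicate_append a n (fun i => R i.castSucc)
      fun i => hR i.castSucc
    have hsplit : replicate (2 * n) (a k) = replicate n (a k) ++ replicate n (a k) := by
      rw [two_mul, replicate_add]
    rw [ofFn_succ', ofFn_succ', concat_eq_append, concat_eq_append, flatten_concat,
      flatten_concat, Fin.val_last, hsplit]
    simpa only [append_assoc, Fin.val_last, Fin.val_castSucc] using
      ih.append (hR (Fin.last k))

theorem flatMap_filter_of_eq_nil {l : List ι} {P : ι → Bool} {f : ι → List α}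
    (hf : ∀ i ∈ l, P i = false → f i = []) : (l.filter P).flatMap f = l.flatMap f := by
  induction l with
  | nil => rfl
  | cons i l ih =>
    have ih' := ih fun j hj => hf j (mem_cons_of_mem _ hj)
    cases hP : P i
    · simp [hP, ih', hf i mem_cons_self hP]
    · simp [hP, ih']

end List

open List

theorem mem_altWord {V : Type*} {a b c : V} {n : ℕ} (h : c ∈ altWord a b n) :
    c = a ∨ c = b := by
  obtain ⟨k, -, rfl⟩ := mem_map.1 h
  split <;> simp

section BipartiteWord

variable {d m : ℕ} (G : SimpleGraph (Fin d ⊕ Fin m)) [DecidableRel G.Adj]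

theorem filter_bipBlock_sublist {S : Fin d ⊕ Fin m → Bool} {i : Fin d} (hS : S (.inl i) = false)
    (j : Fin m) : (bipBlock G i j).filter S <+ replicate (d + 2) (.inr j) := by
  have hmem : ∀ c ∈ bipBlock G i j, c = .inl i ∨ c = .inr j := by
    unfold bipBlock
    split
    · exact fun c => mem_altWord
    · simp
  have hlen : (bipBlock G i j).length ≤ d + 2 := by
    unfold bipBlock altWord
    split <;> simp
  refine sublist_replicate_iff.2
    ⟨_, (length_filter_le _ _).trans hlen, eq_replicate_iff.2 ⟨rfl, fun c hc => ?_⟩⟩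
  obtain ⟨hc, hSc⟩ := mem_filter.1 hc
  rcases hmem c hc with rfl | rfl
  · simp [hS] at hSc
  · rfl

/-- Only the blocks of `u_p` and `u_q` survive in a row, in the order the row visits them. -/
theorem filter_bipRow_sublist {p q : Fin m} (hpq : p < q) (i : Fin d) :
    (bipRow G i).filter (fun c => decide (c = .inr p ∨ c = .inr q)) <+
      if i.val % 2 = 0 then replicate (d + 2) (.inr p) ++ replicate (d + 2) (.inr q)
      else replicate (d + 2) (.inr q) ++ replicate (d + 2) (.inr p) := by
  have hS : decide (Sum.inl i = Sum.inr p ∨ Sum.inl i = Sum.inr q) = false := by simp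
  have hoff : ∀ j, decide (j = p ∨ j = q) = false →
      (bipBlock G i j).filter (fun c => decide (c = .inr p ∨ c = .inr q)) = [] := by
    intro j hj
    refine eq_nil_iff_forall_not_mem.2 fun c hc => ?_
    obtain rfl := eq_of_mem_replicate ((filter_bipBlock_sublist G hS j).subset hc)
    simp_all
  have hpair : (finRange m).filter (fun j => decide (j = p ∨ j = q)) = [p, q] :=
    ((pairwise_lt_finRange m).filter _).eq_of_mem_iff (by simp [hpq]) (by simp)
  unfold bipRow
  rw [filter_flatten, map_map, ← flatMap_def,
    ← flatMap_filter_of_eq_nil (f := filter _ ∘ bipBlock G i) fun j _ => hoff j]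
  split
  · rw [hpair]
    simpa using (filter_bipBlock_sublist G hS p).append (filter_bipBlock_sublist G hS q)
  · rw [filter_reverse, hpair]
    simpa using (filter_bipBlock_sublist G hS q).append (filter_bipBlock_sublist G hS p)

theorem length_le_of_sublist_bipWord {p q : Fin m} (hpq : p < q) {l : List (Fin d ⊕ Fin m)}
    (hl : l <+ bipWord d m G) (hc : l.IsChain (· ≠ ·))
    (hmem : ∀ c ∈ l, c = .inr p ∨ c = .inr q) : l.length ≤ d + 1 := by
  set S : Fin d ⊕ Fin m → Bool := fun c => decide (c = .inr p ∨ c = .inr q)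
  set a : ℕ → Fin d ⊕ Fin m := fun k => if k % 2 = 0 then .inr p else .inr q
  have hrows (i : Fin d) :
      (bipRow G i).filter S <+ replicate (d + 2) (a i) ++ replicate (d + 2) (a (i + 1)) := by
    have := filter_bipRow_sublist G hpq i
    rcases Nat.mod_two_eq_zero_or_one i with h | h <;>
      simpa [S, a, h, Nat.succ_mod_two_eq_zero_iff] using this
  have hfilter : l <+ (ofFn fun i => (bipRow G i).filter S).flatten := by
    have hlS : l.filter S = l := filter_eq_self.2 fun c hc => by simpa [S] using hmem c hc
    have := hl.filter S
    rwa [hlS, bipWord, ← ofFn_eq_map, filter_flatten, map_ofFn] at this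
  have hblocks := hfilter.trans (flatten_ofFn_sublist_of_sublist_replicate_append a _ _ hrows)
  rw [← flatten_concat] at hblocks
  have hconst : ∀ r ∈ (ofFn fun i : Fin d => replicate (2 * (d + 2)) (a i)) ++
      [replicate (d + 2) (a d)], ∃ n c, r = replicate n c := by
    simp only [mem_append, mem_ofFn, mem_singleton]
    rintro r (⟨i, rfl⟩ | rfl) <;> exact ⟨_, _, rfl⟩
  simpa using hc.length_le_of_sublist_flatten_replicate hblocks hconst

end BipartiteWord

theorem bipartite_word_U_not_intersecting_general (d m : ℕ)
    (G : SimpleGraph (Fin d ⊕ Fin m)) [DecidableRel G.Adj]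
    (p q : Fin m) (hpq : p ≠ q) :
    (∀ l : List (Fin d ⊕ Fin m), l.Sublist (bipWord d m G) → l.Chain' (· ≠ ·) →
        (∀ c ∈ l, c = Sum.inr p ∨ c = Sum.inr q) → l.length ≤ d + 1) ∧
      ¬ DIntersecting d (bipWord d m G) (Sum.inr p : Fin d ⊕ Fin m) (Sum.inr q) := by
  have hlength {l : List (Fin d ⊕ Fin m)} (hl : l <+ bipWord d m G) (hc : l.IsChain (· ≠ ·))
      (hmem : ∀ c ∈ l, c = .inr p ∨ c = .inr q) : l.length ≤ d + 1 := by
    rcases hpq.lt_or_gt with h | h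
    · exact length_le_of_sublist_bipWord G h hl hc hmem
    · exact length_le_of_sublist_bipWord G h hl hc fun c hc => (hmem c hc).symm
  refine ⟨fun l => hlength, fun ⟨l, hl, hc, hmem, hlen⟩ => ?_⟩
  have := hlength hl hc hmem
  omega

/-- In the bipartite construction word `W = W₁⋯W_d`, for distinct non-adjacent
`u_p, u_q ∈ U`, every alternating subsequence of `W` in the letters `{u_p, u_q}` has
length at most `d + 1`; hence `u_p` and `u_q` are not `d`-intersecting in `W`. -/
theorem bipartite_word_U_not_intersecting (d m : ℕ) (hdm : d ≤ m)
    (G : SimpleGraph (Fin d ⊕ Fin m)) [DecidableRel G.Adj]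
    (hV : ∀ i j : Fin d, ¬ G.Adj (Sum.inl i) (Sum.inl j))
    (hU : ∀ i j : Fin m, ¬ G.Adj (Sum.inr i) (Sum.inr j))
    (p q : Fin m) (hpq : p ≠ q) :
    (∀ l : List (Fin d ⊕ Fin m), l.Sublist (bipWord d m G) → l.Chain' (· ≠ ·) →
        (∀ c ∈ l, c = Sum.inr p ∨ c = Sum.inr q) → l.length ≤ d + 1) ∧
      ¬ DIntersecting d (bipWord d m G) (Sum.inr p : Fin d ⊕ Fin m) (Sum.inr q) :=
  bipartite_word_U_not_intersecting_general d m G p q hpq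
end

section
/- Gale's evenness condition: Let t₁ < t₂ < ⋯ < t_r be reals, r > d + 1 ≥ 2, let x(t) = (t, t², …, t^d) be the moment curve in ℝ^d, and let T_d be a d-element subset of T = {t₁,…,t_r}. Then conv{x(t) : t ∈ T_d} is a facet of the cyclic polytope conv{x(t) : t ∈ T} if and only if for every two elements of T \ T_d, the number of elements of T_d lying strictly between them (in the order of the reals) is even. -/
/-!
The functions `s ↦ c - f (x s)`, for `f` a linear functional on `ℝ^d` and `c` a level, are exactly
the polynomial functions of degree at most `d`. Hence `T_d` spans a facet iff some polynomial of
degree `≤ d` vanishes at the `d` nodes of `T_d` and is positive at all other nodes. Such a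
polynomial is `a ∏_{i ∈ T_d} (s - tᵢ)`, whose sign at `t_j` (for `j ∉ T_d`) is that of
`a (-1)^{#{i ∈ T_d | j < i}}`. These signs can all be positive iff the parity of
`#{i ∈ T_d | j < i}` is the same for every `j ∉ T_d`, i.e. iff between any two nodes outside `T_d`
there is an even number of nodes of `T_d`.
-/

open Polynomial Finset

namespace Lagrange

variable {F ι : Type*} [Field F] {s : Finset ι} {v : ι → F} {p : F[X]}

theorem nodal_dvd (hvs : Set.InjOn v s) (hp : ∀ i ∈ s, p.eval (v i) = 0) : nodal s v ∣ p :=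
  prod_dvd_of_coprime
    (fun _ hi _ hj hij => isCoprime_X_sub_C_of_isUnit_sub (sub_ne_zero.2 (hvs.ne hi hj hij)).isUnit)
    fun i hi => dvd_iff_isRoot.2 (hp i hi)

theorem exists_eq_C_mul_nodal (hvs : Set.InjOn v s) (hdeg : p.natDegree ≤ #s)
    (hp : ∀ i ∈ s, p.eval (v i) = 0) : ∃ a, p = C a * nodal s v := by
  obtain ⟨g, rfl⟩ := nodal_dvd hvs hp
  rcases eq_or_ne g 0 with rfl | hg
  · exact ⟨0, by simp⟩
  rw [natDegree_mul nodal_ne_zero hg, natDegree_nodal] at hdeg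
  exact ⟨g.coeff 0, by rw [mul_comm, ← eq_C_of_natDegree_eq_zero (by omega)]⟩

end Lagrange

section MomentCurve

variable (R : Type*) [CommRing R] (d : ℕ)

def momentCurve (s : R) : Fin d → R := fun k => s ^ (k.val + 1)

variable {R d}

theorem exists_natDegree_le_eval_eq_sub_momentCurve (f : (Fin d → R) →ₗ[R] R) (c : R) :
    ∃ p : R[X], p.natDegree ≤ d ∧ ∀ s, p.eval s = c - f (momentCurve R d s) := by
  classical
  refine ⟨C c - ∑ k : Fin d, C (f fun j => if k = j then 1 else 0) * X ^ (k.val + 1), ?_,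
    fun s => ?_⟩
  · refine (natDegree_sub_le _ _).trans (max_le (by simp) (natDegree_sum_le_of_forall_le _ _ ?_))
    intro k _
    exact (natDegree_C_mul_le _ _).trans ((natDegree_X_pow_le _).trans (by omega))
  · rw [f.pi_apply_eq_sum_univ]
    simp only [eval_sub, eval_C, eval_finsetSum, eval_mul, eval_pow, eval_X, momentCurve,
      smul_eq_mul, mul_comm]

theorem exists_linearMap_momentCurve_eq (p : R[X]) (hp : p.natDegree ≤ d) :
    ∃ f : (Fin d → R) →ₗ[R] R, ∀ s, f (momentCurve R d s) = p.coeff 0 - p.eval s := by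
  refine ⟨-∑ k : Fin d, p.coeff (k.val + 1) • LinearMap.proj k, fun s => ?_⟩
  rw [eval_eq_sum_range' (Nat.lt_succ_of_le hp), sum_range_succ', pow_zero, mul_one]
  simp [momentCurve, ← Fin.sum_univ_eq_sum_range (fun k => p.coeff (k + 1) * s ^ (k + 1))]

end MomentCurve

theorem exists_facet_momentCurve_iff {ι K : Type*} [Field K] [LinearOrder K]
    [IsStrictOrderedRing K] {t : ι → K} (ht : Function.Injective t) {d : ℕ} {S : Finset ι}
    (hS : #S = d) :
    (∃ (f : (Fin d → K) →ₗ[K] K) (c : K), (∀ i ∈ S, f (momentCurve K d (t i)) = c) ∧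
        ∀ i ∉ S, f (momentCurve K d (t i)) < c) ↔
      ∃ a : K, ∀ j ∉ S, 0 < a * ∏ i ∈ S, (t j - t i) := by
  subst hS
  constructor
  · rintro ⟨f, c, hon, hoff⟩
    obtain ⟨p, hdeg, hp⟩ := exists_natDegree_le_eval_eq_sub_momentCurve f c
    obtain ⟨a, rfl⟩ := Lagrange.exists_eq_C_mul_nodal ht.injOn hdeg
      fun i hi => by rw [hp, hon i hi, sub_self]
    refine ⟨a, fun j hj => ?_⟩
    have := hp (t j)
    rw [eval_mul, eval_C, Lagrange.eval_nodal] at this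
    linarith [hoff j hj]
  · rintro ⟨a, ha⟩
    obtain ⟨f, hf⟩ := exists_linearMap_momentCurve_eq (C a * Lagrange.nodal S t)
      ((natDegree_C_mul_le _ _).trans Lagrange.natDegree_nodal.le)
    refine ⟨f, (C a * Lagrange.nodal S t).coeff 0, fun i hi => ?_, fun j hj => ?_⟩ <;>
      rw [hf, eval_mul, eval_C, Lagrange.eval_nodal]
    · rw [prod_eq_zero hi (sub_self _), mul_zero, sub_zero]
    · linarith [ha j hj]

section Signs

variable {α K : Type*} [LinearOrder α] [Field K] [LinearOrder K] [IsStrictOrderedRing K]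

theorem neg_one_pow_card_mul_prod_sub_pos {t : α → K} (ht : StrictMono t) {S : Finset α} {j : α}
    (hj : j ∉ S) : 0 < (-1 : K) ^ #{k ∈ S | j < k} * ∏ i ∈ S, (t j - t i) := by
  have hsign : (-1 : K) ^ #{k ∈ S | j < k} = ∏ i ∈ S, if j < i then -1 else 1 := by
    rw [prod_ite, prod_const, prod_const_one, mul_one]
  rw [hsign, ← prod_mul_distrib]
  refine prod_pos fun i hi => ?_
  split_ifs with hji
  · linarith [ht hji]
  · linarith [ht ((not_lt.1 hji).lt_of_ne (ne_of_mem_of_not_mem hi hj))]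

theorem exists_pos_mul_neg_one_pow_iff {ι : Type*} (p : ι → Prop) (n : ι → ℕ) :
    (∃ a : K, ∀ j, p j → 0 < a * (-1) ^ n j) ↔ ∀ i j, p i → p j → (Even (n i) ↔ Even (n j)) := by
  constructor
  · rintro ⟨a, ha⟩ i j hi hj
    have hpos : 0 < a ^ 2 * (-1) ^ (n i + n j) := by
      convert mul_pos (ha i hi) (ha j hj) using 1
      ring
    rw [← Nat.even_add]
    by_contra hodd
    rw [Nat.not_even_iff_odd.1 hodd |>.neg_one_pow] at hpos
    nlinarith [sq_nonneg a]
  · intro H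
    by_cases hp : ∃ j₀, p j₀
    · obtain ⟨j₀, hj₀⟩ := hp
      refine ⟨(-1) ^ n j₀, fun j hj => ?_⟩
      rw [← pow_add, (Nat.even_add.2 (H j₀ j hj₀ hj)).neg_one_pow]
      exact one_pos
    · exact ⟨1, fun j hj => (hp ⟨j, hj⟩).elim⟩

theorem exists_pos_mul_prod_sub_iff {t : α → K} (ht : StrictMono t) (S : Finset α) :
    (∃ a : K, ∀ j ∉ S, 0 < a * ∏ i ∈ S, (t j - t i)) ↔
      ∀ i j, i ∉ S → j ∉ S → (Even #{k ∈ S | i < k} ↔ Even #{k ∈ S | j < k}) := by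
  refine Iff.trans ?_ (exists_pos_mul_neg_one_pow_iff (K := K) (· ∉ S) fun j => #{k ∈ S | j < k})
  refine exists_congr fun a => forall₂_congr fun j hj => ?_
  refine Iff.trans ?_ (mul_pos_iff_of_pos_right (neg_one_pow_card_mul_prod_sub_pos ht hj))
  rw [mul_assoc, ← mul_assoc (_ ^ _), ← mul_pow, neg_mul_neg, one_mul, one_pow, one_mul]

end Signs

section Counting

variable {α : Type*} [LinearOrder α]

theorem card_filter_lt_eq_add (S : Finset α) {i j : α} (hij : i < j) (hj : j ∉ S) :
    #{k ∈ S | i < k} = #{k ∈ S | i < k ∧ k < j} + #{k ∈ S | j < k} := by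
  have hdisj : Disjoint {k ∈ S | i < k ∧ k < j} {k ∈ S | j < k} :=
    disjoint_filter.2 fun _ _ h h' => lt_asymm h.2 h'
  rw [← card_union_of_disjoint hdisj, ← filter_or]
  refine congrArg card (filter_congr fun k hk => ?_)
  have := ne_of_mem_of_not_mem hk hj
  constructor <;> grind

theorem even_card_between_iff (S : Finset α) :
    (∀ i j, i ∉ S → j ∉ S → Even #{k ∈ S | i < k ∧ k < j}) ↔
      ∀ i j, i ∉ S → j ∉ S → (Even #{k ∈ S | i < k} ↔ Even #{k ∈ S | j < k}) := by
  have key : ∀ i j, i < j → j ∉ S →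
      (Even #{k ∈ S | i < k ∧ k < j} ↔ (Even #{k ∈ S | i < k} ↔ Even #{k ∈ S | j < k})) := by
    intro i j hij hj
    rw [card_filter_lt_eq_add S hij hj, Nat.even_add]
    tauto
  constructor
  · intro H i j hi hj
    rcases lt_trichotomy i j with hij | rfl | hij
    · exact (key i j hij hj).1 (H i j hi hj)
    · rfl
    · exact ((key j i hij hi).1 (H j i hj hi)).symm
  · intro H i j hi hj
    by_cases hij : i < j
    · exact (key i j hij hj).2 (H i j hi hj)
    · rw [filter_false_of_mem fun k _ h => hij (h.1.trans h.2), card_empty]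
      exact .zero

end Counting

theorem gale_evenness_general (d r : ℕ)
    (t : Fin r → ℝ) (ht : StrictMono t) (Td : Finset (Fin r)) (hTd : Td.card = d) :
    (∃ (f : (Fin d → ℝ) →ₗ[ℝ] ℝ) (c : ℝ),
        (∀ i ∈ Td, f (fun k : Fin d => t i ^ (k.val + 1)) = c) ∧
        (∀ i ∉ Td, f (fun k : Fin d => t i ^ (k.val + 1)) < c)) ↔
      ∀ i j : Fin r, i ∉ Td → j ∉ Td →
        Even ((Td.filter (fun k => i < k ∧ k < j)).card) :=
  (exists_facet_momentCurve_iff ht.injective hTd).trans <|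
    (exists_pos_mul_prod_sub_iff ht Td).trans (even_card_between_iff Td).symm

/-- Gale's evenness condition: for reals `t₁ < ⋯ < t_r` with `r > d + 1 ≥ 2` and a
`d`-element subset `Td` of the index set, the convex hull of the corresponding points of
the moment curve `x(s) = (s, s², …, s^d)` is a facet of the cyclic polytope (i.e. the
points of `Td` lie on a hyperplane having all remaining points strictly on one side) iff
between any two points not in `Td` there is an even number of points of `Td`. -/
theorem gale_evenness (d r : ℕ) (hd : 1 ≤ d) (hr : d + 1 < r)
    (t : Fin r → ℝ) (ht : StrictMono t) (Td : Finset (Fin r)) (hTd : Td.card = d) :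
    (∃ (f : (Fin d → ℝ) →ₗ[ℝ] ℝ) (c : ℝ),
        (∀ i ∈ Td, f (fun k : Fin d => t i ^ (k.val + 1)) = c) ∧
        (∀ i ∉ Td, f (fun k : Fin d => t i ^ (k.val + 1)) < c)) ↔
      ∀ i j : Fin r, i ∉ Td → j ∉ Td →
        Even ((Td.filter (fun k => i < k ∧ k < j)).card) :=
  gale_evenness_general d r t ht Td hTd
end
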